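/- Let G be an endotactic reaction network. For every unit vector w_1 ∈ ℝ^S and every reaction (y,y') ∈ R with ⟨w_1, y'−y⟩ > 0, there exists a reaction (x,x') ∈ R with ⟨w_1, x'−x⟩ < 0 and ⟨w_1, x − y⟩ > 0. -/
import Mathlib


open Finset

/-- A reaction network with species set `Fin n`: a finite set of complexes in `ℝ^n`
and a finite set of reactions between complexes. -/
structure ReactionNetwork (n : ℕ) where
  complexes : Finset (Fin n → ℝ)
  reactions : Finset ((Fin n → ℝ) × (Fin n → ℝ))
  source_mem : ∀ r ∈ reactions, r.1 ∈ complexes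
  target_mem : ∀ r ∈ reactions, r.2 ∈ complexes

/-- The standard dot product on `Fin n → ℝ`. -/
def dotp {n : ℕ} (w x : Fin n → ℝ) : ℝ := ∑ i, w i * x i

/-- The edge relation of the reaction graph. -/
def ReactionNetwork.step {n : ℕ} (G : ReactionNetwork n) (y y' : Fin n → ℝ) : Prop :=
  (y, y') ∈ G.reactions

/-- Two complexes are linked if they lie in the same linkage class (connected
component of the reaction graph): the equivalence closure of the edge relation. -/
def ReactionNetwork.linked {n : ℕ} (G : ReactionNetwork n) : (Fin n → ℝ) → (Fin n → ℝ) → Prop :=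
  Relation.EqvGen G.step

/-- Weak reversibility: every linkage class is strongly connected; equivalently,
for every reaction there is a directed path back from product to reactant. -/
def ReactionNetwork.WeaklyReversible {n : ℕ} (G : ReactionNetwork n) : Prop :=
  ∀ r ∈ G.reactions, Relation.ReflTransGen G.step r.2 r.1

/-- `w` is orthogonal to the stoichiometric subspace (the span of reaction vectors). -/
def ReactionNetwork.OrthToStoich {n : ℕ} (G : ReactionNetwork n) (w : Fin n → ℝ) : Prop :=
  ∀ r ∈ G.reactions, dotp w (r.2 - r.1) = 0

/-- Endotactic: for every `w`, every `w`-essential reaction whose reactant is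
`⟨w,·⟩`-maximal among reactants of `w`-essential reactions satisfies
`⟨w, y' − y⟩ < 0`. -/
def ReactionNetwork.Endotactic {n : ℕ} (G : ReactionNetwork n) : Prop :=
  ∀ w : Fin n → ℝ, ∀ r ∈ G.reactions, dotp w (r.2 - r.1) ≠ 0 →
    (∀ r' ∈ G.reactions, dotp w (r'.2 - r'.1) ≠ 0 → dotp w r'.1 ≤ dotp w r.1) →
    dotp w (r.2 - r.1) < 0

/-- Strongly endotactic: endotactic, and for every `w` not orthogonal to the
stoichiometric subspace there is a reaction `(y, y')` with `⟨w, y' − y⟩ < 0` whose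
reactant `y` is `⟨w,·⟩`-maximal among all reactants. -/
def ReactionNetwork.StronglyEndotactic {n : ℕ} (G : ReactionNetwork n) : Prop :=
  G.Endotactic ∧
  ∀ w : Fin n → ℝ, ¬ G.OrthToStoich w →
    ∃ r ∈ G.reactions, dotp w (r.2 - r.1) < 0 ∧
      ∀ r' ∈ G.reactions, dotp w r'.1 ≤ dotp w r.1

lemma dotp_sub {n : ℕ} (w a b : Fin n → ℝ) : dotp w (a - b) = dotp w a - dotp w b := by
  simp [dotp, mul_sub, Finset.sum_sub_distrib]

/-- in an endotactic network, for every unit vector `w₁` and every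
`(w₁)`-draining reaction `(y, y')` (one with `⟨w₁, y'−y⟩ > 0`), there is a
`(w₁)`-sustaining reaction `(x, x')` (with `⟨w₁, x'−x⟩ < 0`) whose reactant is
strictly `⟨w₁,·⟩`-greater than `y`. -/
theorem endotactic_draining_dominated {n : ℕ}
    (G : ReactionNetwork n) (hend : G.Endotactic)
    (w₁ : Fin n → ℝ) (hw : ∑ i, w₁ i ^ 2 = 1)
    (y y' : Fin n → ℝ) (hr : (y, y') ∈ G.reactions)
    (hdrain : 0 < dotp w₁ (y' - y)) :
    ∃ x x' : Fin n → ℝ, (x, x') ∈ G.reactions ∧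
      dotp w₁ (x' - x) < 0 ∧ 0 < dotp w₁ (x - y) := by
  classical
  set E := G.reactions.filter (fun r => dotp w₁ (r.2 - r.1) ≠ 0) with hE
  have hyE : (y, y') ∈ E := Finset.mem_filter.mpr ⟨hr, ne_of_gt hdrain⟩
  obtain ⟨r, hrE, hmax⟩ := E.exists_max_image (fun r => dotp w₁ r.1) ⟨_, hyE⟩
  have hrR : r ∈ G.reactions := (Finset.mem_filter.mp hrE).1
  have hrne : dotp w₁ (r.2 - r.1) ≠ 0 := (Finset.mem_filter.mp hrE).2
  have hmax' : ∀ r' ∈ G.reactions, dotp w₁ (r'.2 - r'.1) ≠ 0 → dotp w₁ r'.1 ≤ dotp w₁ r.1 :=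
    fun r' h1 h2 => hmax r' (Finset.mem_filter.mpr ⟨h1, h2⟩)
  have hneg := hend w₁ r hrR hrne hmax'
  refine ⟨r.1, r.2, hrR, hneg, ?_⟩
  rw [dotp_sub]
  have hle : dotp w₁ y ≤ dotp w₁ r.1 := hmax _ hyE
  rcases lt_or_eq_of_le hle with h | h
  · linarith
  · exfalso
    have : ∀ r' ∈ G.reactions, dotp w₁ (r'.2 - r'.1) ≠ 0 → dotp w₁ r'.1 ≤ dotp w₁ (y, y').1 := by
      intro r' h1 h2
      simpa [← h] using hmax' r' h1 h2
    have := hend w₁ (y, y') hr (ne_of_gt hdrain) this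
    linarith
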